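/- arXiv:1501.05561 — 3 statements merged into one kernel-verified Lean document; each statement's English description precedes it below -/
import Mathlib

section
/- Let (Ω, F, P) be a probability space and let Y₀, Y₁, Y₂, … be a sequence of random variables on Ω, each taking only the values 0 or 1, each with expectation μ. Assume there exist real numbers r and c with 0 < r < 1 and 0 < c < 1 such that for all natural numbers i, j one has E[(Y_i − μ)·(Y_j − μ)] ≤ r^⌊c·|i−j|⌋. Then, almost surely, lim_{n→∞} (1/n)·∑_{i=0}^{n} Y_i = μ. -/
open MeasureTheory Filter Finset Topology

/-!
Write `X i = Y i - μ`, bounded by `1 + |μ|`. Since `r ^ ⌊x⌋₊ ≤ r⁻¹ * r ^ x`, the covariance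
hypothesis gives `E[X i * X j] ≤ r⁻¹ * q ^ |i - j|` with `q = r ^ c < 1`, and summing the
geometric series, `E[S_n²] = O(n)` for `S_n = ∑_{i<n} X i`. Along the squares `n = k²` the second
moments of `S_n / n` are `O(1 / k²)`, hence summable, so `S_{k²} / k² → 0` almost surely. Between
consecutive squares `S` moves by at most `2k` steps of bounded size, which fills the gaps.
-/

lemma Nat.cast_dist_eq_abs_sub (i j : ℕ) : (Nat.dist i j : ℝ) = |(i : ℝ) - j| := by
  rcases le_total i j with h | h
  · rw [Nat.dist_eq_sub_of_le h, Nat.cast_sub h, abs_sub_comm,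
      abs_of_nonneg (sub_nonneg.2 (Nat.cast_le.2 h))]
  · rw [Nat.dist_eq_sub_of_le_right h, Nat.cast_sub h,
      abs_of_nonneg (sub_nonneg.2 (Nat.cast_le.2 h))]

lemma pow_natFloor_le_inv_mul_rpow {r : ℝ} (hr0 : 0 < r) (hr1 : r ≤ 1) (x : ℝ) :
    r ^ ⌊x⌋₊ ≤ r⁻¹ * r ^ x := by
  rw [← Real.rpow_natCast, ← Real.rpow_neg_one, ← Real.rpow_add hr0]
  exact Real.rpow_le_rpow_of_exponent_ge hr0 hr1 (by linarith [Nat.sub_one_lt_floor x])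

lemma sum_range_pow_dist_le {q : ℝ} (hq0 : 0 ≤ q) (hq1 : q < 1) (n i : ℕ) :
    ∑ j ∈ range n, q ^ Nat.dist i j ≤ 2 / (1 - q) := by
  have geom (m : ℕ) : ∑ d ∈ range m, q ^ d ≤ (1 - q)⁻¹ :=
    tsum_geometric_of_lt_one hq0 hq1 ▸
      (summable_geometric_of_lt_one hq0 hq1).sum_le_tsum _ fun d _ => pow_nonneg hq0 d
  have left : ∑ j ∈ range (i + 1), q ^ Nat.dist i j = ∑ d ∈ range (i + 1), q ^ d := by
    rw [← sum_range_reflect]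
    refine sum_congr rfl fun j hj => ?_
    rw [Nat.dist_eq_sub_of_le_right (by omega)]
    congr 1
    simp at hj
    omega
  have right : ∀ k, q ^ Nat.dist i (i + 1 + k) ≤ q ^ k := fun k => by
    rw [Nat.dist_eq_sub_of_le (by omega)]
    exact pow_le_pow_of_le_one hq0 hq1.le (by omega)
  calc ∑ j ∈ range n, q ^ Nat.dist i j
      ≤ ∑ j ∈ range (i + 1 + n), q ^ Nat.dist i j :=
        sum_le_sum_of_subset_of_nonneg (range_subset_range.2 (by omega))
          fun _ _ _ => pow_nonneg hq0 _
    _ ≤ (1 - q)⁻¹ + (1 - q)⁻¹ := by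
        rw [sum_range_add, left]
        exact add_le_add (geom _) ((sum_le_sum fun k _ => right k).trans (geom n))
    _ = 2 / (1 - q) := by ring

lemma tendsto_div_of_tendsto_div_sq {v : ℕ → ℝ} {C : ℝ} (hstep : ∀ n, |v (n + 1) - v n| ≤ C)
    (hsq : Tendsto (fun k : ℕ => v (k ^ 2) / (k ^ 2 : ℕ)) atTop (𝓝 0)) :
    Tendsto (fun n : ℕ => v n / n) atTop (𝓝 0) := by
  have hgap {m n : ℕ} (h : m ≤ n) : |v n - v m| ≤ C * (n - m) := by
    calc |v n - v m| = dist (v m) (v n) := by rw [Real.dist_eq, abs_sub_comm]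
      _ ≤ ∑ i ∈ Ico m n, dist (v i) (v (i + 1)) := dist_le_Ico_sum_dist v h
      _ ≤ ∑ i ∈ Ico m n, C := sum_le_sum fun i _ => by
          rw [Real.dist_eq, abs_sub_comm]; exact hstep i
      _ = C * (n - m) := by simp [Nat.cast_sub h, mul_comm]
  have hC : 0 ≤ C := (abs_nonneg _).trans (hstep 0)
  have hsqrt : Tendsto Nat.sqrt atTop atTop :=
    tendsto_atTop_atTop.2 fun b => ⟨b ^ 2, fun n hn => Nat.le_sqrt'.2 hn⟩
  have hmajor : Tendsto (fun k : ℕ => |v (k ^ 2) / (k ^ 2 : ℕ)| + 2 * C / k) atTop (𝓝 0) := by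
    simpa using hsq.abs.add (tendsto_const_div_atTop_nhds_zero_nat (2 * C))
  refine squeeze_zero_norm' ?_ (hmajor.comp hsqrt)
  filter_upwards [eventually_ge_atTop 1] with n hn
  set k := Nat.sqrt n
  have hk : 0 < k := Nat.sqrt_pos.2 hn
  have hk2 : k ^ 2 ≤ n := Nat.sqrt_le' n
  have hn2 : (n : ℝ) ≤ k ^ 2 + 2 * k := by
    have h : n < (k + 1) ^ 2 := Nat.lt_succ_sqrt' n
    have : (k + 1) ^ 2 = k ^ 2 + 2 * k + 1 := by ring
    exact_mod_cast (by omega : n ≤ k ^ 2 + 2 * k)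
  have hkR : (0 : ℝ) < k := by exact_mod_cast hk
  have hvn : |v n| ≤ |v (k ^ 2)| + 2 * C * k := by
    have h := hgap hk2
    push_cast at h
    have : C * (n - k ^ 2) ≤ C * (2 * k) := mul_le_mul_of_nonneg_left (by linarith) hC
    linarith [abs_sub_abs_le_abs_sub (v n) (v (k ^ 2))]
  calc ‖v n / n‖ = |v n| / n := by rw [Real.norm_eq_abs, abs_div, Nat.abs_cast]
    _ ≤ (|v (k ^ 2)| + 2 * C * k) / (k ^ 2 : ℕ) := by
        gcongr
    _ = |v (k ^ 2) / (k ^ 2 : ℕ)| + 2 * C / k := by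
        rw [abs_div, Nat.abs_cast]; push_cast; field_simp

section

variable {Ω : Type*} [MeasurableSpace Ω] {P : Measure Ω}

lemma integral_sq_sum_eq {X : ℕ → Ω → ℝ} (hint : ∀ i j, Integrable (fun ω => X i ω * X j ω) P)
    (s : Finset ℕ) :
    ∫ ω, (∑ i ∈ s, X i ω) ^ 2 ∂P = ∑ i ∈ s, ∑ j ∈ s, ∫ ω, X i ω * X j ω ∂P := by
  simp_rw [sq, sum_mul_sum]
  rw [integral_finsetSum _ fun i _ => integrable_finsetSum _ fun j _ => hint i j]
  exact sum_congr rfl fun i _ => integral_finsetSum _ fun j _ => hint i j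

lemma integral_sq_sum_range_le {X : ℕ → Ω → ℝ} (hX : ∀ i, MemLp (X i) 2 P) {a q : ℝ}
    (hq0 : 0 ≤ q) (hq1 : q < 1) (hcov : ∀ i j, ∫ ω, X i ω * X j ω ∂P ≤ a * q ^ Nat.dist i j)
    (n : ℕ) :
    ∫ ω, (∑ i ∈ range n, X i ω) ^ 2 ∂P ≤ n * (a * (2 / (1 - q))) := by
  have ha : 0 ≤ a := by
    have h0 : 0 ≤ ∫ ω, X 0 ω * X 0 ω ∂P := integral_nonneg fun ω => mul_self_nonneg _
    simpa using h0.trans (hcov 0 0)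
  rw [integral_sq_sum_eq fun i j => (hX i).integrable_mul (hX j)]
  calc _ ≤ ∑ i ∈ range n, ∑ j ∈ range n, a * q ^ Nat.dist i j := by
        gcongr with i _ j _; exact hcov i j
    _ ≤ ∑ i ∈ range n, a * (2 / (1 - q)) := by
        gcongr with i _
        rw [← mul_sum]
        exact mul_le_mul_of_nonneg_left (sum_range_pow_dist_le hq0 hq1 n i) ha
    _ = n * (a * (2 / (1 - q))) := by simp

lemma ae_tendsto_zero_of_summable_integral_norm {E : Type*} [NormedAddCommGroup E]
    {g : ℕ → Ω → E} (hint : ∀ k, Integrable (g k) P)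
    (hsum : Summable fun k => ∫ ω, ‖g k ω‖ ∂P) :
    ∀ᵐ ω ∂P, Tendsto (fun k => g k ω) atTop (𝓝 0) := by
  have hfin : ∑' k, eLpNorm (g k) 1 P ≠ ⊤ := by
    simp_rw [eLpNorm_one_eq_lintegral_enorm, ← ofReal_integral_norm_eq_lintegral_enorm (hint _)]
    rw [← ENNReal.ofReal_tsum_of_nonneg (fun k => integral_nonneg fun _ => norm_nonneg _) hsum]
    exact ENNReal.ofReal_ne_top
  filter_upwards [summable_norm_of_tsum_eLpNorm_ne_top le_rfl
    (fun k => (hint k).aestronglyMeasurable) hfin] with ω hω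
  exact tendsto_zero_iff_norm_tendsto_zero.2 hω.tendsto_atTop_zero

theorem ae_tendsto_sum_range_div_of_integral_mul_le [IsFiniteMeasure P] {X : ℕ → Ω → ℝ}
    (hX : ∀ i, AEStronglyMeasurable (X i) P) {B : ℝ} (hB : ∀ i ω, |X i ω| ≤ B) {a q : ℝ}
    (hq0 : 0 ≤ q) (hq1 : q < 1) (hcov : ∀ i j, ∫ ω, X i ω * X j ω ∂P ≤ a * q ^ Nat.dist i j) :
    ∀ᵐ ω ∂P, Tendsto (fun n : ℕ => (∑ i ∈ range n, X i ω) / n) atTop (𝓝 0) := by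
  set S : ℕ → Ω → ℝ := fun n ω => ∑ i ∈ range n, X i ω
  set K := a * (2 / (1 - q))
  have hL2 (i : ℕ) : MemLp (X i) 2 P := .of_bound (hX i) B (ae_of_all _ (hB i))
  have hS2 (n : ℕ) (m : ℝ) : Integrable (fun ω => (S n ω / m) ^ 2) P := by
    simpa only [div_pow] using
      ((memLp_finsetSum _ fun i _ => hL2 i).integrable_sq).div_const (m ^ 2)
  have hmean_sq (n : ℕ) : ∫ ω, (S n ω / n) ^ 2 ∂P ≤ K / n := by
    simp_rw [div_pow]
    rw [integral_div]
    rcases n.eq_zero_or_pos with rfl | hn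
    · simp
    rw [div_le_div_iff₀ (by positivity) (by positivity)]
    calc (∫ ω, S n ω ^ 2 ∂P) * n ≤ n * K * n := by
          gcongr; exact integral_sq_sum_range_le hL2 hq0 hq1 hcov n
      _ = K * (n : ℝ) ^ 2 := by ring
  have hsub : ∀ᵐ ω ∂P, Tendsto (fun k : ℕ => (S (k ^ 2) ω / (k ^ 2 : ℕ)) ^ 2) atTop (𝓝 0) := by
    refine ae_tendsto_zero_of_summable_integral_norm (fun k => hS2 _ _) ?_
    refine .of_nonneg_of_le (fun k => integral_nonneg fun _ => norm_nonneg _) (fun k => ?_)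
      ((Real.summable_one_div_nat_pow.2 one_lt_two).mul_left K)
    calc ∫ ω, ‖(S (k ^ 2) ω / (k ^ 2 : ℕ)) ^ 2‖ ∂P
        = ∫ ω, (S (k ^ 2) ω / (k ^ 2 : ℕ)) ^ 2 ∂P := by
          simp_rw [Real.norm_of_nonneg (sq_nonneg _)]
      _ ≤ K / (k ^ 2 : ℕ) := hmean_sq _
      _ = K * (1 / (k : ℝ) ^ 2) := by push_cast; ring
  filter_upwards [hsub] with ω hω
  refine tendsto_div_of_tendsto_div_sq (C := B) (fun n => ?_) ?_
  · simpa [S, sum_range_succ] using hB n ω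
  · have h := hω.sqrt
    simp only [Real.sqrt_sq_eq_abs, Real.sqrt_zero] at h
    exact (tendsto_zero_iff_abs_tendsto_zero _).2 h

end

lemma tendsto_sum_range_succ_div {y : ℕ → ℝ} {μ : ℝ}
    (h : Tendsto (fun n : ℕ => (∑ i ∈ range n, (y i - μ)) / n) atTop (𝓝 0)) :
    Tendsto (fun n : ℕ => (∑ i ∈ range (n + 1), y i) / n) atTop (𝓝 μ) := by
  have hmean : Tendsto (fun n : ℕ => (∑ i ∈ range n, y i) / n) atTop (𝓝 μ) := by
    refine (zero_add μ ▸ h.add_const μ).congr' ?_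
    filter_upwards [eventually_ne_atTop 0] with n hn
    simp only [sum_sub_distrib, sum_const, card_range, nsmul_eq_mul]
    field_simp
    ring
  have hratio : Tendsto (fun n : ℕ => 1 + 1 / (n : ℝ)) atTop (𝓝 1) := by
    simpa using tendsto_const_nhds.add (tendsto_one_div_atTop_nhds_zero_nat (𝕜 := ℝ))
  refine (mul_one μ ▸ ((hmean.comp (tendsto_add_atTop_nat 1)).mul hratio)).congr' ?_
  filter_upwards [eventually_ne_atTop 0] with n hn
  simp only [Function.comp_apply]
  push_cast
  field_simp

theorem stmt0_general {Ω : Type*} [MeasurableSpace Ω] (P : Measure Ω) [IsProbabilityMeasure P]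
    (Y : ℕ → Ω → ℝ) (hmeas : ∀ i, Measurable (Y i))
    (hval : ∀ i ω, Y i ω = 0 ∨ Y i ω = 1)
    (μ : ℝ)
    (r c : ℝ) (hr0 : 0 < r) (hr1 : r < 1) (hc0 : 0 < c)
    (hcov : ∀ i j : ℕ,
      ∫ ω, (Y i ω - μ) * (Y j ω - μ) ∂P ≤ r ^ (⌊c * |(i : ℝ) - (j : ℝ)|⌋₊)) :
    ∀ᵐ ω ∂P, Tendsto (fun n : ℕ => (∑ i ∈ Finset.range (n + 1), Y i ω) / n)
      atTop (nhds μ) := by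
  have hcov' (i j : ℕ) :
      ∫ ω, (Y i ω - μ) * (Y j ω - μ) ∂P ≤ r⁻¹ * (r ^ c) ^ Nat.dist i j := by
    rw [← Real.rpow_natCast, ← Real.rpow_mul hr0.le, Nat.cast_dist_eq_abs_sub]
    exact (hcov i j).trans (pow_natFloor_le_inv_mul_rpow hr0 hr1.le _)
  have hbound (i : ℕ) (ω : Ω) : |Y i ω - μ| ≤ 1 + |μ| :=
    (abs_sub _ _).trans (by rcases hval i ω with h | h <;> simp [h])
  filter_upwards [ae_tendsto_sum_range_div_of_integral_mul_le
    (fun i => ((hmeas i).sub_const μ).aestronglyMeasurable) hbound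
    (Real.rpow_nonneg hr0.le c) (Real.rpow_lt_one hr0.le hr1 hc0) hcov'] with ω hω
  exact tendsto_sum_range_succ_div hω

/-- Variant of the strong law of large numbers for correlated 0/1-valued
random variables with exponentially decaying correlations. -/
theorem stmt0 {Ω : Type*} [MeasurableSpace Ω] (P : Measure Ω) [IsProbabilityMeasure P]
    (Y : ℕ → Ω → ℝ) (hmeas : ∀ i, Measurable (Y i))
    (hval : ∀ i ω, Y i ω = 0 ∨ Y i ω = 1)
    (μ : ℝ) (hexp : ∀ i, ∫ ω, Y i ω ∂P = μ)
    (r c : ℝ) (hr0 : 0 < r) (hr1 : r < 1) (hc0 : 0 < c) (hc1 : c < 1)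
    (hcov : ∀ i j : ℕ,
      ∫ ω, (Y i ω - μ) * (Y j ω - μ) ∂P ≤ r ^ (⌊c * |(i : ℝ) - (j : ℝ)|⌋₊)) :
    ∀ᵐ ω ∂P, Tendsto (fun n : ℕ => (∑ i ∈ Finset.range (n + 1), Y i ω) / n)
      atTop (nhds μ) :=
  stmt0_general P Y hmeas hval μ r c hr0 hr1 hc0 hcov
end

section
/- Let P be a probability measure on a measurable space, let ε > 0, let U be a measurable set with P(U) ≥ 1 − ε, and let (H_n)_{n∈ℕ} be a countable family of pairwise disjoint measurable sets with P(⋃_{n} H_n) ≥ 1 − ε. Then there exists a subset A ⊆ ℕ such that P(⋃_{n∈A} H_n) ≥ 1 − 2·√ε and, for every n ∈ A, P(H_n) > 0 and P(U ∩ H_n) > (1 − √ε)·P(H_n). -/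
open MeasureTheory

/-- From a large event `U` and a disjoint family `H` of large total mass one can
select a subfamily of mass at least `1 - 2√ε` on each member of which `U` has
conditional probability more than `1 - √ε`. -/
theorem stmt4 {Ω : Type*} [MeasurableSpace Ω] (P : Measure Ω) [IsProbabilityMeasure P]
    (ε : ℝ) (hε : 0 < ε)
    (U : Set Ω) (hU : MeasurableSet U) (hUP : 1 - ε ≤ (P U).toReal)
    (H : ℕ → Set Ω) (hH : ∀ n, MeasurableSet (H n))
    (hdisj : Pairwise (Function.onFun Disjoint H))
    (hHP : 1 - ε ≤ (P (⋃ n, H n)).toReal) :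
    ∃ A : Set ℕ,
      1 - 2 * Real.sqrt ε ≤ (P (⋃ n ∈ A, H n)).toReal ∧
      ∀ n ∈ A, 0 < (P (H n)).toReal ∧
        (1 - Real.sqrt ε) * (P (H n)).toReal < (P (U ∩ H n)).toReal := by
  set s := Real.sqrt ε with hsdef
  have hs0 : 0 < s := Real.sqrt_pos.mpr hε
  have hss : s * s = ε := Real.mul_self_sqrt hε.le
  set A : Set ℕ := {n | 0 < (P (H n)).toReal ∧
      (1 - s) * (P (H n)).toReal < (P (U ∩ H n)).toReal} with hA
  refine ⟨A, ?_, fun n hn => hn⟩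
  -- key pointwise inequality for bad indices
  have key : ∀ n ∈ Aᶜ, ENNReal.ofReal s * P (H n) ≤ P (Uᶜ ∩ H n) := by
    intro n hn
    have hfin : P (H n) ≠ ⊤ := measure_ne_top _ _
    have hfin2 : P (Uᶜ ∩ H n) ≠ ⊤ := measure_ne_top _ _
    rw [← ENNReal.ofReal_toReal hfin, ← ENNReal.ofReal_mul hs0.le]
    refine le_trans (ENNReal.ofReal_le_ofReal ?_) (ENNReal.ofReal_toReal_le)
    simp only [hA, Set.mem_compl_iff, Set.mem_setOf_eq, not_and, not_lt] at hn
    rcases eq_or_lt_of_le (ENNReal.toReal_nonneg : 0 ≤ (P (H n)).toReal) with h0 | h0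
    · rw [← h0, mul_zero]; exact ENNReal.toReal_nonneg
    · have hle := hn h0
      have hsplit : P (U ∩ H n) + P (Uᶜ ∩ H n) = P (H n) := by
        rw [Set.inter_comm U, Set.inter_comm Uᶜ, ← Set.diff_eq]
        exact measure_inter_add_diff (H n) hU
      have := congrArg ENNReal.toReal hsplit
      rw [ENNReal.toReal_add (measure_ne_top _ _) (measure_ne_top _ _)] at this
      nlinarith [ENNReal.toReal_nonneg (a := P (U ∩ H n))]
  -- sum over bad indices
  have hbad : ENNReal.ofReal s * P (⋃ n ∈ Aᶜ, H n) ≤ P Uᶜ := by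
    have h1 : P (⋃ n ∈ Aᶜ, H n) = ∑' n : ↥Aᶜ, P (H n) :=
      measure_biUnion (Set.to_countable _) (hdisj.set_pairwise _) (fun n _ => hH n)
    have h2 : P (⋃ n ∈ Aᶜ, Uᶜ ∩ H n) = ∑' n : ↥Aᶜ, P (Uᶜ ∩ H n) :=
      measure_biUnion (Set.to_countable _)
        (fun i _ j _ hij => ((hdisj hij).mono Set.inter_subset_right
          Set.inter_subset_right))
        (fun n _ => (hU.compl).inter (hH n))
    rw [h1, ENNReal.tsum_mul_left.symm]
    calc ∑' n : ↥Aᶜ, ENNReal.ofReal s * P (H n)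
        ≤ ∑' n : ↥Aᶜ, P (Uᶜ ∩ H n) := ENNReal.tsum_le_tsum fun n => key n n.2
      _ = P (⋃ n ∈ Aᶜ, Uᶜ ∩ H n) := h2.symm
      _ ≤ P Uᶜ := measure_mono (Set.iUnion₂_subset fun n _ => Set.inter_subset_left)
  -- P Uᶜ ≤ ε
  have hUc : P Uᶜ ≤ ENNReal.ofReal ε := by
    rw [ENNReal.le_ofReal_iff_toReal_le (measure_ne_top _ _) hε.le]
    have := prob_compl_eq_one_sub hU (μ := P)
    rw [this, ENNReal.toReal_sub_of_le prob_le_one ENNReal.one_ne_top]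
    simp only [ENNReal.toReal_one]
    linarith
  -- bad union has mass ≤ s
  have hbad2 : P (⋃ n ∈ Aᶜ, H n) ≤ ENNReal.ofReal s := by
    have h := hbad.trans hUc
    rw [← hss, ENNReal.ofReal_mul hs0.le] at h
    exact (ENNReal.mul_le_mul_iff_right (ENNReal.ofReal_pos.mpr hs0).ne'
      ENNReal.ofReal_ne_top).mp h
  have hbad3 : (P (⋃ n ∈ Aᶜ, H n)).toReal ≤ s := by
    rw [← ENNReal.ofReal_le_ofReal_iff hs0.le] at *
    exact (ENNReal.ofReal_toReal (measure_ne_top _ _)).le.trans hbad2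
  -- total bound
  have hsplit : P (⋃ n, H n) ≤ P (⋃ n ∈ A, H n) + P (⋃ n ∈ Aᶜ, H n) := by
    refine le_trans (measure_mono ?_) (measure_union_le _ _)
    intro x hx
    rcases Set.mem_iUnion.mp hx with ⟨n, hn⟩
    by_cases h : n ∈ A
    · exact Or.inl (Set.mem_biUnion h hn)
    · exact Or.inr (Set.mem_biUnion h hn)
  have hsplit' : (P (⋃ n, H n)).toReal ≤
      (P (⋃ n ∈ A, H n)).toReal + (P (⋃ n ∈ Aᶜ, H n)).toReal := by
    refine le_trans (ENNReal.toReal_mono ?_ hsplit) ?_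
    · exact ENNReal.add_ne_top.mpr ⟨measure_ne_top _ _, measure_ne_top _ _⟩
    · rw [ENNReal.toReal_add (measure_ne_top _ _) (measure_ne_top _ _)]
  have hApos : (0:ℝ) ≤ (P (⋃ n ∈ A, H n)).toReal := ENNReal.toReal_nonneg
  rcases le_or_gt s 1 with hs1 | hs1
  · nlinarith
  · nlinarith
end

section
/- Let S be a countable type with the discrete σ-algebra, let μ be a probability measure on the sequence space Ω = ℕ → S, let ε > 0, let ℓ ≥ 1 be a natural number, and let W ⊆ Ω be a measurable set with μ(W) > 1 − ε. Then there exists a set V of finite sequences (lists) over S, each of length ℓ, such that μ(⋃_{h∈V} Cyl(h)) ≥ 1 − 2·ℓ·√(ℓ·ε) and, for every h ∈ V and every prefix h′ of h with μ(Cyl(h′)) > 0, one has μ(W ∩ Cyl(h′)) > (1 − √ε)·μ(Cyl(h′)). -/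
/-!
Let `V` consist of the histories of length `ℓ` all of whose prefixes `h'` satisfy
`μ(W ∩ Cyl h') > (1 - √ε) μ(Cyl h')`. A run outside `⋃ V` passes through a prefix violating
this, of some length `k ≤ ℓ`. On such a prefix `Wᶜ` carries at least a `√ε`-fraction of the
cylinder's mass, and the cylinders of a fixed length are disjoint, so by a Markov-type count the
violating prefixes of length `k` cover mass at most `μ(Wᶜ)/√ε < √ε`. Summing over
`k = 0, …, ℓ` leaves `μ(⋃ V) ≥ 1 - (ℓ + 1)√ε ≥ 1 - 2ℓ√(ℓε)`.
-/

open MeasureTheory ENNReal Set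

/-- The cylinder set of all infinite sequences extending the finite sequence `h`. -/
def Cyl {S : Type*} (h : List S) : Set (ℕ → S) :=
  {ω | ∀ i : Fin h.length, ω i = h.get i}

section Cylinders

variable {S : Type*}

lemma measurableSet_Cyl [MeasurableSpace S] [DiscreteMeasurableSpace S] (h : List S) :
    MeasurableSet (Cyl h) := by
  have : Cyl h = ⋂ i : Fin h.length, (fun ω : ℕ → S => ω i) ⁻¹' {h.get i} := by
    ext ω; simp [Cyl]
  rw [this]
  exact .iInter fun i => measurable_pi_apply _ (measurableSet_singleton _)

lemma disjoint_Cyl {h₁ h₂ : List S} (hlen : h₁.length = h₂.length) (hne : h₁ ≠ h₂) :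
    Disjoint (Cyl h₁) (Cyl h₂) := by
  refine disjoint_left.mpr fun ω hω₁ hω₂ => hne (List.ext_get hlen fun i hi₁ hi₂ => ?_)
  rw [← hω₁ ⟨i, hi₁⟩, ← hω₂ ⟨i, hi₂⟩]

lemma Cyl_subset_Cyl_of_prefix {h' h : List S} (hp : h' <+: h) : Cyl h ⊆ Cyl h' := by
  obtain ⟨t, rfl⟩ := hp
  intro ω hω i
  rw [hω ⟨i, by simp only [List.length_append]; omega⟩]
  simp

lemma mem_Cyl_ofFn (ω : ℕ → S) (ℓ : ℕ) : ω ∈ Cyl (List.ofFn fun i : Fin ℓ => ω i) := by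
  intro i
  simp

lemma compl_biUnion_Cyl_subset (P : List S → Prop) (ℓ : ℕ) :
    (⋃ h ∈ {h : List S | h.length = ℓ ∧ ∀ h', h' <+: h → P h'}, Cyl h)ᶜ ⊆
      ⋃ k ∈ Finset.range (ℓ + 1), ⋃ h ∈ {h : List S | h.length = k ∧ ¬ P h}, Cyl h := by
  intro ω hω
  set hω_ℓ := List.ofFn fun i : Fin ℓ => ω i
  have hlen : hω_ℓ.length = ℓ := List.length_ofFn
  obtain ⟨h', hp, hbad⟩ : ∃ h', h' <+: hω_ℓ ∧ ¬ P h' := by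
    by_contra! hall
    exact hω (mem_biUnion (x := hω_ℓ) ⟨hlen, hall⟩ (mem_Cyl_ofFn ω ℓ))
  have hk : h'.length < ℓ + 1 := Nat.lt_succ_of_le (hlen ▸ hp.length_le)
  simp only [mem_iUnion]
  exact ⟨h'.length, Finset.mem_range.mpr hk, h', ⟨rfl, hbad⟩,
    Cyl_subset_Cyl_of_prefix hp (mem_Cyl_ofFn ω ℓ)⟩

end Cylinders

section Markov

variable {α : Type*} [MeasurableSpace α] {μ : Measure α}

lemma mul_measure_biUnion_le {ι : Type*} {s : Set ι} (hs : s.Countable) {C : ι → Set α}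
    (hd : s.PairwiseDisjoint C) (hC : ∀ i ∈ s, MeasurableSet (C i)) {A : Set α}
    (hA : MeasurableSet A) {c : ℝ≥0∞} (h : ∀ i ∈ s, c * μ (C i) ≤ μ (A ∩ C i)) :
    c * μ (⋃ i ∈ s, C i) ≤ μ A :=
  calc c * μ (⋃ i ∈ s, C i) = ∑' i : s, c * μ (C i) := by
        rw [measure_biUnion hs hd hC, ENNReal.tsum_mul_left]
    _ ≤ ∑' i : s, μ (A ∩ C i) := ENNReal.tsum_le_tsum fun i => h i i.2
    _ = μ (⋃ i ∈ s, A ∩ C i) :=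
        (measure_biUnion hs (hd.mono fun _ => inter_subset_right)
          fun i hi => hA.inter (hC i hi)).symm
    _ ≤ μ A := measure_mono (iUnion₂_subset fun _ _ => inter_subset_left)

lemma ofReal_mul_measure_le_measure_compl_inter [IsFiniteMeasure μ] {W C : Set α}
    (hW : MeasurableSet W) {δ : ℝ} (hδ : 0 ≤ δ)
    (h : μ.real (W ∩ C) ≤ (1 - δ) * μ.real C) :
    ENNReal.ofReal δ * μ C ≤ μ (Wᶜ ∩ C) := by
  have hsplit : μ.real (C ∩ W) + μ.real (C \ W) = μ.real C := measureReal_inter_add_sdiff hW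
  have hreal : δ * μ.real C ≤ μ.real (Wᶜ ∩ C) := by
    rw [inter_comm W] at h
    rw [inter_comm, ← sdiff_eq]
    linarith
  calc ENNReal.ofReal δ * μ C = ENNReal.ofReal (δ * μ.real C) := by
        rw [ENNReal.ofReal_mul hδ, ofReal_measureReal]
    _ ≤ ENNReal.ofReal (μ.real (Wᶜ ∩ C)) := ENNReal.ofReal_le_ofReal hreal
    _ = μ (Wᶜ ∩ C) := ofReal_measureReal

end Markov

lemma mul_measureReal_biUnion_Cyl_le {S : Type*} [Countable S] [MeasurableSpace S]
    [DiscreteMeasurableSpace S] {μ : Measure (ℕ → S)} [IsFiniteMeasure μ] {W : Set (ℕ → S)}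
    (hW : MeasurableSet W) {δ : ℝ} (hδ : 0 ≤ δ) {k : ℕ} {B : Set (List S)}
    (hB : ∀ h ∈ B, h.length = k ∧ μ.real (W ∩ Cyl h) ≤ (1 - δ) * μ.real (Cyl h)) :
    δ * μ.real (⋃ h ∈ B, Cyl h) ≤ μ.real Wᶜ := by
  have hd : B.PairwiseDisjoint Cyl := fun h₁ h₁B h₂ h₂B hne =>
    disjoint_Cyl ((hB h₁ h₁B).1.trans (hB h₂ h₂B).1.symm) hne
  have := mul_measure_biUnion_le (μ := μ) B.to_countable hd (fun h _ => measurableSet_Cyl h)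
    hW.compl fun h hh => ofReal_mul_measure_le_measure_compl_inter hW hδ (hB h hh).2
  have := ENNReal.toReal_mono (measure_ne_top μ _) this
  rwa [ENNReal.toReal_mul, ENNReal.toReal_ofReal hδ] at this

lemma add_one_mul_sqrt_le {ε : ℝ} (hε : 0 ≤ ε) {ℓ : ℕ} (hℓ : 1 ≤ ℓ) :
    (ℓ + 1) * Real.sqrt ε ≤ 2 * ℓ * Real.sqrt (ℓ * ε) := by
  have hℓR : (1 : ℝ) ≤ ℓ := Nat.one_le_cast.mpr hℓ
  have hsqrt : Real.sqrt ε ≤ Real.sqrt (ℓ * ε) := Real.sqrt_le_sqrt (by nlinarith)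
  nlinarith [Real.sqrt_nonneg ε]

/-- A large measurable set `W` of runs admits a set `V` of histories of length `ℓ`
of mass at least `1 - 2ℓ√(ℓε)` such that `W` has conditional probability more than
`1 - √ε` given any prefix of any history in `V`. -/
theorem stmt6 {S : Type*} [Countable S] [MeasurableSpace S] [DiscreteMeasurableSpace S]
    (μ : Measure (ℕ → S)) [IsProbabilityMeasure μ]
    (ε : ℝ) (hε : 0 < ε) (ℓ : ℕ) (hℓ : 1 ≤ ℓ)
    (W : Set (ℕ → S)) (hW : MeasurableSet W) (hWμ : 1 - ε < (μ W).toReal) :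
    ∃ V : Set (List S), (∀ h ∈ V, h.length = ℓ) ∧
      1 - 2 * ℓ * Real.sqrt (ℓ * ε) ≤ (μ (⋃ h ∈ V, Cyl h)).toReal ∧
      ∀ h ∈ V, ∀ h' : List S, h' <+: h → 0 < (μ (Cyl h')).toReal →
        (1 - Real.sqrt ε) * (μ (Cyl h')).toReal < (μ (W ∩ Cyl h')).toReal := by
  set δ := Real.sqrt ε
  have hδ : 0 < δ := Real.sqrt_pos.mpr hε
  let good (h' : List S) : Prop := (1 - δ) * μ.real (Cyl h') < μ.real (W ∩ Cyl h')
  let V := {h : List S | h.length = ℓ ∧ ∀ h', h' <+: h → good h'}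
  refine ⟨V, fun h hh => hh.1, ?_, fun h hh h' hp _ => hh.2 h' hp⟩
  have hbad (k : ℕ) : μ.real (⋃ h ∈ {h : List S | h.length = k ∧ ¬ good h}, Cyl h) ≤ δ := by
    have hmarkov := mul_measureReal_biUnion_Cyl_le (B := {h | h.length = k ∧ ¬ good h}) hW hδ.le
      fun h hh => ⟨hh.1, not_lt.mp hh.2⟩
    rw [probReal_compl_eq_one_sub hW] at hmarkov
    have hδsq : δ * δ = ε := Real.mul_self_sqrt hε.le
    change 1 - ε < μ.real W at hWμ
    nlinarith
  have hcompl : μ.real (⋃ h ∈ V, Cyl h)ᶜ ≤ (ℓ + 1) * δ :=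
    calc μ.real (⋃ h ∈ V, Cyl h)ᶜ
        ≤ μ.real (⋃ k ∈ Finset.range (ℓ + 1),
            ⋃ h ∈ {h : List S | h.length = k ∧ ¬ good h}, Cyl h) :=
          measureReal_mono (compl_biUnion_Cyl_subset good ℓ) (measure_ne_top μ _)
      _ ≤ ∑ k ∈ Finset.range (ℓ + 1), δ :=
          (measureReal_biUnion_finset_le _ _).trans (Finset.sum_le_sum fun k _ => hbad k)
      _ = (ℓ + 1) * δ := by simp
  rw [probReal_compl_eq_one_sub (.biUnion V.to_countable fun h _ => measurableSet_Cyl h)]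
    at hcompl
  change _ ≤ μ.real _
  linarith [add_one_mul_sqrt_le hε.le hℓ]
end
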